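/- Let G = (V,E) be a connected graph, S ⊆ V, and T = (V, E') the spanning tree obtained by taking a BFS spanning tree T_0 of G[S] (assumed connected) together with the lexicographically-least shortest paths from each vertex u ∉ S to its anchor anc_S(u). Then for any edge (u,v) of G with not both endpoints in S, the edge (u,v) belongs to E' if and only if (u,v) lies on P_G(u, anc_S(u)) or on P_G(v, anc_S(v)). -/

import Mathlib

/-- Path ordering `≺`: shorter, or equal length and lexicographically smaller support. -/
def WalkPrec {n : ℕ} {G : SimpleGraph (Fin n)} {u a b : Fin n}
    (p : G.Walk u a) (q : G.Walk u b) : Prop :=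
  p.length < q.length ∨
    (p.length = q.length ∧ List.Lex (· < ·) p.support q.support)

/-- `p : G.Walk u v` is the lexicographically-least shortest path from `u` to `S`,
ending at the anchor `v = anc_S(u)`. -/
def IsAnchorPath {n : ℕ} {G : SimpleGraph (Fin n)} (S : Set (Fin n)) {u v : Fin n}
    (p : G.Walk u v) : Prop :=
  v ∈ S ∧
    (∀ q : G.Walk u v, q ≠ p → WalkPrec p q) ∧
    (∀ w, w ∈ S → w ≠ v → ∀ q : G.Walk u w, WalkPrec p q)

private lemma walkPrec_asymm {n : ℕ} {G : SimpleGraph (Fin n)} {u a b : Fin n}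
    {p : G.Walk u a} {q : G.Walk u b} (h1 : WalkPrec p q) (h2 : WalkPrec q p) : False := by
  rcases h1 with h1 | ⟨he1, hl1⟩ <;> rcases h2 with h2 | ⟨he2, hl2⟩
  · omega
  · omega
  · omega
  · exact (List.Lex.asymm (· < ·)).asymm _ _ hl1 hl2

/-- Tail consistency: if `pth x = cons h q` with the second vertex `y ∉ S`,
then `q` coincides (in edges and length) with the anchor path of `y`. -/
private lemma tail_eq {n : ℕ} {G : SimpleGraph (Fin n)} {S : Set (Fin n)}
    {anc : Fin n → Fin n} {pth : ∀ u, G.Walk u (anc u)}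
    (hanc : ∀ u, u ∉ S → IsAnchorPath S (pth u))
    {x y : Fin n} (hx : x ∉ S) (hy : y ∉ S) (h : G.Adj x y)
    (q : G.Walk y (anc x)) (hp : pth x = SimpleGraph.Walk.cons h q) :
    (pth y).edges = q.edges ∧ (pth y).length = q.length := by
  have hlenx : (pth x).length = q.length + 1 := by rw [hp]; simp
  have hsupx : (pth x).support = x :: q.support := by rw [hp]; simp
  have hay : anc y ∈ S := (hanc y hy).1
  have hax : anc x ∈ S := (hanc x hx).1
  by_cases hxy : anc y = anc x
  · -- cast q to a walk y → anc y
    set q' : G.Walk y (anc y) := q.copy rfl hxy.symm with hq'def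
    have hq'e : q'.edges = q.edges := SimpleGraph.Walk.edges_copy q rfl hxy.symm
    have hq's : q'.support = q.support := SimpleGraph.Walk.support_copy q rfl hxy.symm
    have hq'l : q'.length = q.length := SimpleGraph.Walk.length_copy q rfl hxy.symm
    by_cases hqe : q' = pth y
    · constructor
      · rw [← hqe, hq'e]
      · rw [← hqe, hq'l]
    · exfalso
      have hprec : WalkPrec (pth y) q' := (hanc y hy).2.1 q' hqe
      set r : G.Walk x (anc x) := (SimpleGraph.Walk.cons h (pth y)).copy rfl hxy with hrdef
      have hrl : r.length = (pth y).length + 1 := by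
        rw [hrdef, SimpleGraph.Walk.length_copy]; simp
      have hrs : r.support = x :: (pth y).support := by
        rw [hrdef, SimpleGraph.Walk.support_copy]; simp
      have hrne : r ≠ pth x := by
        intro he
        have hl : r.length = (pth x).length := by rw [he]
        have hs : r.support = (pth x).support := by rw [he]
        rw [hrl, hlenx] at hl
        rw [hrs, hsupx] at hs
        have hs' : (pth y).support = q.support := by
          injection hs
        rcases hprec with h' | ⟨_, hlex⟩
        · omega
        · rw [hq's, ← hs'] at hlex
          exact (List.Lex.asymm (· < ·)).asymm _ _ hlex hlex
      have hprecx : WalkPrec (pth x) r := (hanc x hx).2.1 r hrne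
      rcases hprecx with h' | ⟨hle, hlex⟩
      · rw [hlenx, hrl] at h'
        rcases hprec with h'' | ⟨he'', _⟩
        · rw [hq'l] at h''; omega
        · rw [hq'l] at he''; omega
      · rw [hlenx, hrl] at hle
        rw [hsupx, hrs] at hlex
        have hlex' : List.Lex (· < ·) q.support (pth y).support :=
          (List.lex_cons_iff).mp hlex
        rcases hprec with h'' | ⟨_, hlex''⟩
        · rw [hq'l] at h''; omega
        · rw [hq's] at hlex''
          exact (List.Lex.asymm (· < ·)).asymm _ _ hlex' hlex''
  · exfalso
    have hprec : WalkPrec (pth y) q :=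
      (hanc y hy).2.2 (anc x) hax (fun e => hxy e.symm) q
    have hprecx : WalkPrec (pth x) (SimpleGraph.Walk.cons h (pth y)) :=
      (hanc x hx).2.2 (anc y) hay hxy _
    have hcl : (SimpleGraph.Walk.cons h (pth y)).length = (pth y).length + 1 := by simp
    have hcs : (SimpleGraph.Walk.cons h (pth y)).support = x :: (pth y).support := by simp
    rcases hprecx with h' | ⟨hle, hlex⟩
    · rw [hlenx, hcl] at h'
      rcases hprec with h'' | ⟨he'', _⟩ <;> omega
    · rw [hlenx, hcl] at hle
      rw [hsupx, hcs] at hlex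
      have hlex' : List.Lex (· < ·) q.support (pth y).support :=
        (List.lex_cons_iff).mp hlex
      rcases hprec with h'' | ⟨_, hlex''⟩
      · omega
      · exact (List.Lex.asymm (· < ·)).asymm _ _ hlex' hlex''

private lemma key {n : ℕ} {G : SimpleGraph (Fin n)} {S : Set (Fin n)}
    {anc : Fin n → Fin n} {pth : ∀ u, G.Walk u (anc u)}
    (hanc : ∀ u, u ∉ S → IsAnchorPath S (pth u)) :
    ∀ k x, (pth x).length ≤ k → x ∉ S → ∀ u v : Fin n,
      s(u, v) ∈ (pth x).edges → s(u, v) ∈ (pth u).edges ∨ s(u, v) ∈ (pth v).edges := by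
  intro k
  induction k with
  | zero =>
    intro x hl hx u v he
    have : (pth x).edges.length = 0 := by
      rw [SimpleGraph.Walk.length_edges]; omega
    rw [List.length_eq_zero_iff] at this
    rw [this] at he
    exact absurd he List.not_mem_nil
  | succ k ih =>
    intro x hl hx u v he
    have hax : anc x ∈ S := (hanc x hx).1
    have hne : x ≠ anc x := fun e => hx (e ▸ hax)
    have hnn : ¬ (pth x).Nil := by
      rw [SimpleGraph.Walk.nil_iff_length_eq]
      intro h0
      exact hne ((pth x).eq_of_length_eq_zero h0)
    obtain ⟨y, h, q, hp⟩ := SimpleGraph.Walk.not_nil_iff.mp hnn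
    have hlenx : (pth x).length = q.length + 1 := by rw [hp]; simp
    rw [hp, SimpleGraph.Walk.edges_cons, List.mem_cons] at he
    rcases he with he | he
    · -- first edge
      rw [Sym2.eq_iff] at he
      rcases he with ⟨hu, hv⟩ | ⟨hu, hv⟩
      · left
        subst hu; subst hv
        rw [hp, SimpleGraph.Walk.edges_cons]
        exact List.mem_cons_self
      · right
        subst hu; subst hv
        rw [hp, SimpleGraph.Walk.edges_cons]
        have : s(v, u) = s(u, v) := Sym2.eq_swap
        rw [this]
        exact List.mem_cons_self
    · by_cases hy : y ∈ S
      · -- then q must be nil, contradiction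
        exfalso
        have hle1 : (pth x).length ≤ 1 := by
          by_cases hya : y = anc x
          · set r : G.Walk x (anc x) := (SimpleGraph.Walk.cons h SimpleGraph.Walk.nil).copy rfl hya
            have hrl : r.length = 1 := by
              simp [r, SimpleGraph.Walk.length_copy]
            by_cases hre : r = pth x
            · rw [← hre, hrl]
            · have := (hanc x hx).2.1 r hre
              rcases this with h' | ⟨he', _⟩ <;> omega
          · have := (hanc x hx).2.2 y hy hya (SimpleGraph.Walk.cons h SimpleGraph.Walk.nil)
            have h1 : (SimpleGraph.Walk.cons h (SimpleGraph.Walk.nil : G.Walk y y)).length = 1 := by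
              simp
            rcases this with h' | ⟨he', _⟩ <;> omega
        have hq0 : q.length = 0 := by omega
        have : q.edges.length = 0 := by rw [SimpleGraph.Walk.length_edges]; omega
        rw [List.length_eq_zero_iff] at this
        rw [this] at he
        exact absurd he List.not_mem_nil
      · obtain ⟨hedges, hlen⟩ := tail_eq hanc hx hy h q hp
        have : s(u, v) ∈ (pth y).edges := by rw [hedges]; exact he
        exact ih y (by omega) hy u v this

/-- With `T = (V, E')` built from a spanning tree `T0` of `G[S]` together with the
lexicographically-least shortest anchor paths of all vertices outside `S`
(and trivial paths `anc_S(u) = u` for `u ∈ S`): an edge `(u,v)` of `G` with not both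
endpoints in `S` belongs to `E'` if and only if it lies on `P_G(u, anc_S(u))`
or on `P_G(v, anc_S(v))`. -/
theorem stmt3 {n : ℕ} (G : SimpleGraph (Fin n)) (hG : G.Connected)
    (S : Set (Fin n)) (hS : S.Nonempty)
    (T0 : SimpleGraph (Fin n)) (hT0le : T0 ≤ G)
    (hT0S : ∀ a b, T0.Adj a b → a ∈ S ∧ b ∈ S)
    (hT0ac : T0.IsAcyclic)
    (hT0conn : ∀ a ∈ S, ∀ b ∈ S, T0.Reachable a b)
    (anc : Fin n → Fin n) (pth : ∀ u, G.Walk u (anc u))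
    (hanc : ∀ u, u ∉ S → IsAnchorPath S (pth u))
    (hancS : ∀ u ∈ S, (pth u).length = 0) :
    ∀ u v : Fin n, G.Adj u v → ¬(u ∈ S ∧ v ∈ S) →
      (s(u, v) ∈ T0.edgeSet ∪ ⋃ x ∈ Sᶜ, {e | e ∈ (pth x).edges} ↔
        s(u, v) ∈ (pth u).edges ∨ s(u, v) ∈ (pth v).edges) := by
  intro u v huv hnb
  constructor
  · rintro (hT | hU)
    · exact absurd (hT0S u v hT) hnb
    · rw [Set.mem_iUnion₂] at hU
      obtain ⟨x, hx, hmem⟩ := hU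
      exact key hanc (pth x).length x le_rfl hx u v hmem
  · rintro (h | h)
    · have hu : u ∉ S := by
        intro huS
        have : (pth u).edges.length = 0 := by
          rw [SimpleGraph.Walk.length_edges]; exact hancS u huS
        rw [List.length_eq_zero_iff] at this
        rw [this] at h
        exact absurd h List.not_mem_nil
      right
      rw [Set.mem_iUnion₂]
      exact ⟨u, hu, h⟩
    · have hv : v ∉ S := by
        intro hvS
        have : (pth v).edges.length = 0 := by
          rw [SimpleGraph.Walk.length_edges]; exact hancS v hvS
        rw [List.length_eq_zero_iff] at this
        rw [this] at h
        exact absurd h List.not_mem_nil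
      right
      rw [Set.mem_iUnion₂]
      exact ⟨v, hv, h⟩
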